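/- Let G = (V,E) be a finite simple graph. For positive integers k, the quantity (−1)^{|V|} χ_G(−k) is weakly increasing in k, and is strictly positive for all k ≥ 1 whenever V is nonempty. -/

import Mathlib

/-!
Deletion–contraction, `χ_G = χ_{G - uv} - χ_{G / uv}`, shows by induction that
`(-1)ⁿ χ_G(-x) = xⁿ + R(x)` for a polynomial `R` with nonnegative coefficients: the contraction
has one vertex fewer, so its sign flips and the subtraction becomes an addition. Such a
polynomial is increasing on `x ≥ 0` and bounded below by `xⁿ`.
-/

open SimpleGraph Polynomial

/-- Number of proper colorings of `G` with `k` colors. -/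
noncomputable def properColoringCount {V : Type*} (G : SimpleGraph V) (k : ℕ) : ℕ :=
  Nat.card {f : V → Fin k // ∀ u v, G.Adj u v → f u ≠ f v}

/-- `P` is the chromatic polynomial of `G`. -/
def IsChromaticPoly {V : Type*} (G : SimpleGraph V) (P : Polynomial ℤ) : Prop :=
  ∀ k : ℕ, P.eval (k : ℤ) = properColoringCount G k

theorem Polynomial.eval_le_eval_of_coeff_nonneg {R : Type*} [CommSemiring R] [PartialOrder R]
    [IsOrderedRing R] {p : R[X]} (hp : ∀ i, 0 ≤ p.coeff i) {x y : R}
    (hx : 0 ≤ x) (hxy : x ≤ y) : p.eval x ≤ p.eval y := by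
  simp only [eval_eq_sum_range]
  gcongr with i
  exact hp i

def HasPositiveSignedReflection (n : ℕ) (P : ℤ[X]) : Prop :=
  ∃ R : ℤ[X], (∀ i, 0 ≤ R.coeff i) ∧ ∀ x : ℤ, (-1) ^ n * P.eval (-x) = x ^ n + R.eval x

namespace HasPositiveSignedReflection

theorem X_pow (n : ℕ) : HasPositiveSignedReflection n (X ^ n) :=
  ⟨0, fun _ => le_rfl, fun x => by simp [← mul_pow]⟩

theorem sub {n : ℕ} {P Q : ℤ[X]} (hP : HasPositiveSignedReflection (n + 1) P)
    (hQ : HasPositiveSignedReflection n Q) : HasPositiveSignedReflection (n + 1) (P - Q) := by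
  obtain ⟨R, hR, hPR⟩ := hP
  obtain ⟨S, hS, hQS⟩ := hQ
  refine ⟨R + X ^ n + S, fun i => ?_, fun x => ?_⟩
  · rw [coeff_add, coeff_add, coeff_X_pow]
    exact add_nonneg (add_nonneg (hR i) (by split_ifs <;> norm_num)) (hS i)
  · rw [eval_sub, eval_add, eval_add, eval_pow, eval_X]
    linear_combination hPR x + hQS x

theorem monotoneOn {n : ℕ} {P : ℤ[X]} (hP : HasPositiveSignedReflection n P) :
    MonotoneOn (fun x : ℤ => (-1) ^ n * P.eval (-x)) (Set.Ici 0) := by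
  obtain ⟨R, hR, hPR⟩ := hP
  intro x hx y _ hxy
  simp only [hPR]
  exact add_le_add (pow_le_pow_left₀ hx hxy n) (eval_le_eval_of_coeff_nonneg hR hx hxy)

theorem pos {n : ℕ} {P : ℤ[X]} (hP : HasPositiveSignedReflection n P) {x : ℤ} (hx : 0 < x) :
    0 < (-1) ^ n * P.eval (-x) := by
  obtain ⟨R, hR, hPR⟩ := hP
  have : 0 ≤ R.eval x := (coeff_zero_eq_eval_zero R ▸ hR 0).trans
    (eval_le_eval_of_coeff_nonneg hR le_rfl hx.le)
  rw [hPR]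
  positivity

end HasPositiveSignedReflection

section Colorings

variable {V : Type*}

def properColorings (G : SimpleGraph V) (k : ℕ) : Set (V → Fin k) :=
  {f | ∀ u v, G.Adj u v → f u ≠ f v}

theorem properColoringCount_eq_ncard (G : SimpleGraph V) (k : ℕ) :
    properColoringCount G k = (properColorings G k).ncard :=
  rfl

theorem properColorings_deleteEdges_sdiff {G : SimpleGraph V} {u v : V} (huv : G.Adj u v) (k : ℕ) :
    properColorings (G.deleteEdges {s(u, v)}) k \ {f | f u = f v} = properColorings G k := by
  ext f
  simp only [properColorings, Set.mem_sdiff, Set.mem_ofPred_eq, deleteEdges_adj,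
    Set.mem_singleton_iff]
  refine ⟨fun ⟨hf, hfuv⟩ x y hxy => ?_, fun hf => ⟨fun x y hxy => hf x y hxy.1, hf u v huv⟩⟩
  by_cases he : s(x, y) = s(u, v)
  · rcases Sym2.eq_iff.1 he with ⟨rfl, rfl⟩ | ⟨rfl, rfl⟩
    exacts [hfuv, Ne.symm hfuv]
  · exact hf x y ⟨hxy, he⟩

section Contraction

variable [DecidableEq V] {v : V}

/-- `G.map (mergeVertex u)` is the contraction of the edge `uv` (`map` drops the loop). -/
def mergeVertex (u : {x // x ≠ v}) (x : V) : {x // x ≠ v} :=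
  if h : x = v then u else ⟨x, h⟩

theorem val_mergeVertex (u : {x // x ≠ v}) (x : V) :
    (mergeVertex u x : V) = if x = v then (u : V) else x := by
  unfold mergeVertex; split_ifs <;> rfl

theorem mergeVertex_self (u : {x // x ≠ v}) : mergeVertex u v = u :=
  dif_pos rfl

theorem mergeVertex_val (u : {x // x ≠ v}) (a : {x // x ≠ v}) : mergeVertex u a = a :=
  dif_neg a.2

theorem mergeVertex_surjective (u : {x // x ≠ v}) : Function.Surjective (mergeVertex u) :=
  fun a => ⟨a, mergeVertex_val u a⟩

theorem mergeVertex_eq_mergeVertex_iff (u : {x // x ≠ v}) {x y : V} :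
    mergeVertex u x = mergeVertex u y ↔ x = y ∨ s(x, y) = s((u : V), v) := by
  have := u.2
  rw [← Subtype.val_inj, val_mergeVertex, val_mergeVertex, Sym2.eq_iff]
  split_ifs <;> grind

theorem image_comp_properColorings_map_mergeVertex (G : SimpleGraph V) (u : {x // x ≠ v})
    (k : ℕ) : (· ∘ mergeVertex u) '' properColorings (G.map (mergeVertex u)) k =
      properColorings (G.deleteEdges {s((u : V), v)}) k ∩ {f | f u = f v} := by
  ext f
  simp only [properColorings, Set.mem_image, Set.mem_inter_iff, Set.mem_ofPred_eq,
    deleteEdges_adj, Set.mem_singleton_iff]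
  constructor
  · rintro ⟨g, hg, rfl⟩
    refine ⟨fun x y ⟨hxy, he⟩ => hg _ _ ⟨?_, x, y, hxy, rfl, rfl⟩, ?_⟩
    · rw [Ne, mergeVertex_eq_mergeVertex_iff]
      exact not_or.2 ⟨hxy.ne, he⟩
    · simp only [Function.comp_apply, mergeVertex_val, mergeVertex_self]
  · rintro ⟨hf, hfuv⟩
    have hf_merge : ∀ x, f (mergeVertex u x) = f x := by
      intro x
      rw [val_mergeVertex]
      split_ifs with h
      exacts [h ▸ hfuv, rfl]
    refine ⟨fun a => f a, ?_, funext hf_merge⟩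
    rintro _ _ ⟨hne, x, y, hxy, rfl, rfl⟩
    show f (mergeVertex u x : V) ≠ f (mergeVertex u y)
    rw [hf_merge, hf_merge]
    exact hf x y ⟨hxy, fun he => hne ((mergeVertex_eq_mergeVertex_iff u).2 (Or.inr he))⟩

theorem properColoringCount_deleteEdges [Finite V] {G : SimpleGraph V} {u v : V} (huv : G.Adj u v)
    (k : ℕ) :
    properColoringCount (G.deleteEdges {s(u, v)}) k =
      properColoringCount G k + properColoringCount (G.map (mergeVertex ⟨u, huv.ne⟩)) k := by
  simp only [properColoringCount_eq_ncard]
  rw [← Set.ncard_inter_add_ncard_sdiff_eq_ncard _ {f | f u = f v} (Set.toFinite _),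
    properColorings_deleteEdges_sdiff huv,
    ← image_comp_properColorings_map_mergeVertex G ⟨u, huv.ne⟩,
    Set.ncard_image_of_injective _ (mergeVertex_surjective _).injective_comp_right, add_comm]

theorem IsChromaticPoly.sub_of_deleteEdges [Finite V] {G : SimpleGraph V} {u v : V}
    (huv : G.Adj u v) {P Q : ℤ[X]} (hP : IsChromaticPoly (G.deleteEdges {s(u, v)}) P)
    (hQ : IsChromaticPoly (G.map (mergeVertex ⟨u, huv.ne⟩)) Q) : IsChromaticPoly G (P - Q) :=
  fun k => by
    rw [eval_sub, hP, hQ, properColoringCount_deleteEdges huv]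
    push_cast
    ring

end Contraction

theorem IsChromaticPoly.eq {G : SimpleGraph V} {P Q : ℤ[X]} (hP : IsChromaticPoly G P)
    (hQ : IsChromaticPoly G Q) : P = Q :=
  eq_of_infinite_eval_eq P Q <| (Set.infinite_range_of_injective Nat.cast_injective).mono <| by
    rintro _ ⟨k, rfl⟩
    exact (hP k).trans (hQ k).symm

theorem isChromaticPoly_bot [Fintype V] :
    IsChromaticPoly (⊥ : SimpleGraph V) (X ^ Fintype.card V) := by
  intro k
  simp [properColoringCount, Nat.card_fun]

theorem exists_isChromaticPoly_hasPositiveSignedReflection [Fintype V] (G : SimpleGraph V) :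
    ∃ P, IsChromaticPoly G P ∧ HasPositiveSignedReflection (Fintype.card V) P := by
  classical
  induction hn : Fintype.card V using Nat.strong_induction_on generalizing V with
  | _ n ih =>
  induction G using WellFoundedLT.induction with
  | _ G ihG =>
  rcases eq_or_ne G ⊥ with rfl | hG
  · exact ⟨_, isChromaticPoly_bot, hn ▸ .X_pow _⟩
  obtain ⟨u, v, huv⟩ := ne_bot_iff_exists_adj.1 hG
  have hlt : G.deleteEdges {s(u, v)} < G := by
    refine (deleteEdges_le _).lt_of_ne fun h => ?_
    have : (G.deleteEdges {s(u, v)}).Adj u v := by rw [h]; exact huv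
    simp at this
  obtain ⟨P, hP, hPs⟩ := ihG _ hlt
  have hcard : Fintype.card {x // x ≠ v} + 1 = n := by
    rw [Fintype.card_subtype_compl, Fintype.card_subtype_eq]
    have := Fintype.card_pos_iff.2 ⟨v⟩
    omega
  obtain ⟨Q, hQ, hQs⟩ := ih _ (by omega) (G.map (mergeVertex ⟨u, huv.ne⟩)) rfl
  rw [← hcard] at hPs ⊢
  exact ⟨P - Q, hP.sub_of_deleteEdges huv hQ, hPs.sub hQs⟩

end Colorings

/-- `(-1)^|V| χ_G(-k)` is weakly increasing in the positive integer `k`, and is strictly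
positive for all `k ≥ 1` when `V` is nonempty. -/
theorem signed_chromatic_monotone_pos {V : Type*} [Fintype V] (G : SimpleGraph V)
    (P : Polynomial ℤ) (hP : IsChromaticPoly G P) :
    (∀ k₁ k₂ : ℕ, 1 ≤ k₁ → k₁ ≤ k₂ →
      (-1 : ℤ) ^ (Fintype.card V) * P.eval (-(k₁ : ℤ)) ≤
        (-1 : ℤ) ^ (Fintype.card V) * P.eval (-(k₂ : ℤ))) ∧
    (Nonempty V → ∀ k : ℕ, 1 ≤ k →
      0 < (-1 : ℤ) ^ (Fintype.card V) * P.eval (-(k : ℤ))) := by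
  obtain ⟨Q, hQ, hQs⟩ := exists_isChromaticPoly_hasPositiveSignedReflection G
  obtain rfl := hP.eq hQ
  exact ⟨fun k₁ k₂ _ hk => hQs.monotoneOn (Set.mem_Ici.2 k₁.cast_nonneg)
      (Set.mem_Ici.2 k₂.cast_nonneg) (by exact_mod_cast hk),
    fun _ k hk => hQs.pos (by omega)⟩
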